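/- arXiv:2503.17127 — 2 statements merged into one kernel-verified Lean document; each statement's English description precedes it below -/
import Mathlib

section
/- Let f, g : ℂⁿ → ℂ be holomorphic germs at 0 with f(0)=g(0)=0 and g ≢ 0, let k = ord₀ g, let φ : (ℂⁿ,0) → (ℂⁿ,0) and φ̂ : (ℂ,0) → (ℂ,0) be maps with f = φ̂ ∘ g ∘ φ. Assume φ has a pseudo-derivative dφ at 0 with respect to a sequence T = {t_j} ⊂ (0,∞) with t_j → 0, and φ̂ has a pseudo-derivative dφ̂ at 0 with respect to T' = {t_jᵏ}. If dφ and dφ̂ are homeomorphisms, then for all v ∈ ℂⁿ the limit lim_{j→∞} (φ̂ ∘ g ∘ φ)(t_j v)/t_jᵏ exists and equals dφ̂(g_*(dφ(v))). -/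
open Filter Topology Asymptotics

/-!
Write `g_*(y) = q k (y, …, y)`. Since the diagonal terms of `q` below degree `k` vanish,
`g y = g_* y + O(‖y‖^(k+1))`, and `g_*` is homogeneous of degree `k`. Writing
`φ (t_j v) = t_j w_j` with `w_j → dφ v` (the pseudo-derivative of `φ` at the single point `v`),
this gives `g (φ (t_j v)) / t_jᵏ = g_*(w_j) + O(t_j) → g_*(dφ v)`. Finally
`φ̂ (g (φ (t_j v))) / t_jᵏ` is the `j`-th rescaling of `φ̂` evaluated at that convergent
sequence; since the rescalings converge locally uniformly to the continuous `dφ̂`, the limit is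
`dφ̂ (g_*(dφ v))`.
-/

namespace FormalMultilinearSeries

variable {𝕜 E F : Type*} [NontriviallyNormedField 𝕜] [NormedAddCommGroup E] [NormedSpace 𝕜 E]
  [NormedAddCommGroup F] [NormedSpace 𝕜 F]

theorem partialSum_succ_of_apply_diag_eq_zero {q : FormalMultilinearSeries 𝕜 E F} {k : ℕ}
    (hlow : ∀ j < k, ∀ y : E, q j (fun _ => y) = 0) (y : E) :
    q.partialSum (k + 1) y = q k (fun _ => y) := by
  rw [partialSum, Finset.sum_range_succ,
    Finset.sum_eq_zero fun j hj => hlow j (Finset.mem_range.1 hj) y, zero_add]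

theorem apply_diag_smul (q : FormalMultilinearSeries 𝕜 E F) (k : ℕ) (c : 𝕜) (y : E) :
    q k (fun _ => c • y) = c ^ k • q k (fun _ => y) := by
  simpa [Finset.prod_const] using (q k).map_smul_univ (fun _ => c) (fun _ => y)

theorem continuous_apply_diag (q : FormalMultilinearSeries 𝕜 E F) (k : ℕ) :
    Continuous fun y : E => q k (fun _ => y) :=
  (q k).cont.comp (continuous_pi fun _ => continuous_id)

end FormalMultilinearSeries

namespace HasFPowerSeriesAt

open FormalMultilinearSeries

variable {𝕜 E F : Type*} [NontriviallyNormedField 𝕜] [NormedAddCommGroup E] [NormedSpace 𝕜 E]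
  [NormedAddCommGroup F] [NormedSpace 𝕜 F] {g : E → F} {q : FormalMultilinearSeries 𝕜 E F}
  {k : ℕ}

theorem isBigO_sub_apply_diag (hq : HasFPowerSeriesAt g q 0)
    (hlow : ∀ j < k, ∀ y : E, q j (fun _ => y) = 0) :
    (fun y => g y - q k (fun _ => y)) =O[𝓝 0] fun y => ‖y‖ ^ (k + 1) := by
  simpa [partialSum_succ_of_apply_diag_eq_zero hlow] using hq.isBigO_sub_partialSum_pow (k + 1)

theorem tendsto_inv_pow_smul_comp_smul (hq : HasFPowerSeriesAt g q 0)
    (hlow : ∀ j < k, ∀ y : E, q j (fun _ => y) = 0) {ι : Type*} {l : Filter ι}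
    {c : ι → 𝕜} {w : ι → E} {w₀ : E} (hc : Tendsto c l (𝓝 0)) (hc0 : ∀ i, c i ≠ 0)
    (hw : Tendsto w l (𝓝 w₀)) :
    Tendsto (fun i => (c i ^ k)⁻¹ • g (c i • w i)) l (𝓝 (q k fun _ => w₀)) := by
  have hcw : Tendsto (fun i => c i • w i) l (𝓝 0) := by simpa using hc.smul hw
  have hsplit : ∀ i, (c i ^ k)⁻¹ • g (c i • w i) =
      (c i ^ k)⁻¹ • (g (c i • w i) - q k (fun _ => c i • w i)) + q k (fun _ => w i) := by
    intro i
    rw [smul_sub, apply_diag_smul, inv_smul_smul₀ (pow_ne_zero k (hc0 i)), sub_add_cancel]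
  have hrem : Tendsto (fun i => (c i ^ k)⁻¹ • (g (c i • w i) - q k (fun _ => c i • w i)))
      l (𝓝 0) := by
    obtain ⟨C, hC⟩ := (hq.isBigO_sub_apply_diag hlow).bound
    have hbound : Tendsto (fun i => C * ‖c i‖ * ‖w i‖ ^ (k + 1)) l (𝓝 0) := by
      simpa using ((tendsto_const_nhds (x := C)).mul hc.norm).mul (hw.norm.pow (k + 1))
    refine squeeze_zero_norm' ?_ hbound
    filter_upwards [hcw.eventually hC] with i hi
    have hck : 0 < ‖c i‖ ^ k := pow_pos (norm_pos_iff.2 (hc0 i)) k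
    rw [norm_smul, norm_inv, norm_pow, inv_mul_le_iff₀ hck]
    calc ‖g (c i • w i) - q k (fun _ => c i • w i)‖
        ≤ C * ‖‖c i • w i‖ ^ (k + 1)‖ := hi
      _ = ‖c i‖ ^ k * (C * ‖c i‖ * ‖w i‖ ^ (k + 1)) := by
        rw [norm_pow, norm_norm, norm_smul]; ring
  simpa [hsplit] using hrem.add ((q.continuous_apply_diag k).tendsto w₀ |>.comp hw)

end HasFPowerSeriesAt

theorem pseudo_derivative_comp_limit_general (n k : ℕ) (g : (Fin n → ℂ) → ℂ)
    (q : FormalMultilinearSeries ℂ (Fin n → ℂ) ℂ) (hq : HasFPowerSeriesAt g q 0)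
    (hqlow : ∀ j < k, ∀ v : Fin n → ℂ, q j (fun _ => v) = 0)
    (φ : (Fin n → ℂ) → Fin n → ℂ)
    (φh : ℂ → ℂ)
    (t : ℕ → ℝ) (ht : ∀ j, 0 < t j) (htlim : Tendsto t atTop (𝓝 0))
    (dφ : (Fin n → ℂ) → Fin n → ℂ) (dφh : ℂ → ℂ)
    (hdφ : ∀ K : Set (Fin n → ℂ), IsCompact K →
      TendstoUniformlyOn (fun j v => (t j)⁻¹ • φ (t j • v)) dφ atTop K)
    (hdφh : ∀ K : Set ℂ, IsCompact K →
      TendstoUniformlyOn (fun j z => ((t j) ^ k)⁻¹ • φh ((t j) ^ k • z)) dφh atTop K)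
    (hdφhhom : IsHomeomorph dφh) :
    ∀ v : Fin n → ℂ,
      Tendsto (fun j : ℕ => φh (g (φ (t j • v))) / (t j : ℂ) ^ k) atTop
        (𝓝 (dφh (q k (fun _ => dφ v)))) := by
  intro v
  have ht0 : ∀ j, (t j : ℂ) ≠ 0 := fun j => Complex.ofReal_ne_zero.2 (ht j).ne'
  have hw : Tendsto (fun j => (t j)⁻¹ • φ (t j • v)) atTop (𝓝 (dφ v)) :=
    (hdφ {v} isCompact_singleton).tendsto_at rfl
  have hg : Tendsto (fun j => g (φ (t j • v)) / (t j : ℂ) ^ k) atTop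
      (𝓝 (q k fun _ => dφ v)) := by
    refine (hq.tendsto_inv_pow_smul_comp_smul hqlow (by simpa using htlim.ofReal) ht0 hw).congr
      fun j => ?_
    rw [← Complex.coe_smul, Complex.ofReal_inv, smul_inv_smul₀ (ht0 j), smul_eq_mul, inv_mul_eq_div]
  refine ((tendstoLocallyUniformly_iff_forall_isCompact.2 hdφh).tendsto_comp
    hdφhhom.continuous.continuousAt hg).congr fun j => ?_
  simp only [Complex.real_smul]
  push_cast
  rw [mul_div_cancel₀ _ (pow_ne_zero k (ht0 j)), inv_mul_eq_div]

/-- Let `f = φ̂ ∘ g ∘ φ` with `f, g` holomorphic germs at `0` vanishing at `0`,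
`g ≢ 0` of order `k` (expressed via a power series `q` of `g` with vanishing diagonal parts
below degree `k` and nonzero diagonal part `g_*` in degree `k`). Suppose `φ` has a
pseudo-derivative `dφ` at `0` w.r.t. a sequence `t_j → 0⁺` and `φ̂` has a pseudo-derivative
`dφ̂` at `0` w.r.t. `t_jᵏ`, and `dφ`, `dφ̂` are homeomorphisms. Then for every `v`,
`(φ̂ ∘ g ∘ φ)(t_j • v) / t_jᵏ → dφ̂ (g_* (dφ v))` as `j → ∞`. -/
theorem pseudo_derivative_comp_limit (n k : ℕ) (f g : (Fin n → ℂ) → ℂ)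
    (hf : AnalyticAt ℂ f 0) (hf0 : f 0 = 0) (hg0 : g 0 = 0)
    (q : FormalMultilinearSeries ℂ (Fin n → ℂ) ℂ) (hq : HasFPowerSeriesAt g q 0)
    (hqlow : ∀ j < k, ∀ v : Fin n → ℂ, q j (fun _ => v) = 0)
    (hqk : (fun v : Fin n → ℂ => q k (fun _ => v)) ≠ 0)
    (φ : (Fin n → ℂ) → Fin n → ℂ) (hφ0 : φ 0 = 0) (hφc : ContinuousAt φ 0)
    (φh : ℂ → ℂ) (hφh0 : φh 0 = 0) (hφhc : ContinuousAt φh 0)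
    (hcomp : ∀ x, f x = φh (g (φ x)))
    (t : ℕ → ℝ) (ht : ∀ j, 0 < t j) (htlim : Tendsto t atTop (𝓝 0))
    (dφ : (Fin n → ℂ) → Fin n → ℂ) (dφh : ℂ → ℂ)
    (hdφ : ∀ K : Set (Fin n → ℂ), IsCompact K →
      TendstoUniformlyOn (fun j v => (t j)⁻¹ • φ (t j • v)) dφ atTop K)
    (hdφh : ∀ K : Set ℂ, IsCompact K →
      TendstoUniformlyOn (fun j z => ((t j) ^ k)⁻¹ • φh ((t j) ^ k • z)) dφh atTop K)
    (hdφhom : IsHomeomorph dφ) (hdφhhom : IsHomeomorph dφh) :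
    ∀ v : Fin n → ℂ,
      Tendsto (fun j : ℕ => φh (g (φ (t j • v))) / (t j : ℂ) ^ k) atTop
        (𝓝 (dφh (q k (fun _ => dφ v)))) :=
  pseudo_derivative_comp_limit_general n k g q hq hqlow φ φh t ht htlim dφ dφh hdφ hdφh hdφhhom
end

section
/- Let f, g : ℂⁿ → ℂ be holomorphic germs at 0 vanishing at 0, with f ≢ 0, g ≢ 0, and suppose f_* = dφ̂ ∘ g_* ∘ dφ where dφ : ℂⁿ → ℂⁿ and dφ̂ : ℂ → ℂ are homeomorphisms fixing 0. Then f_*⁻¹(1) is homeomorphic to g_*⁻¹(c) where c = dφ̂⁻¹(1), and consequently f_*⁻¹(1) and g_*⁻¹(1) are homotopy equivalent. -/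
/-- Let `f, g` be holomorphic germs at `0` vanishing at `0`, `f ≢ 0`, `g ≢ 0`,
with initial forms `f_* v = p mf (v, …, v)` and `g_* v = q mg (v, …, v)`, and suppose
`f_* = dφ̂ ∘ g_* ∘ dφ` with `dφ : ℂⁿ → ℂⁿ` and `dφ̂ : ℂ → ℂ` homeomorphisms fixing `0`.
Then `f_*⁻¹(1)` is homeomorphic to `g_*⁻¹(c)` where `c = dφ̂⁻¹(1)`, and consequently
`f_*⁻¹(1)` and `g_*⁻¹(1)` are homotopy equivalent. -/
theorem milnor_fibres_initial_forms (n mf mg : ℕ) (f g : (Fin n → ℂ) → ℂ)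
    (p q : FormalMultilinearSeries ℂ (Fin n → ℂ) ℂ)
    (hp : HasFPowerSeriesAt f p 0) (hq : HasFPowerSeriesAt g q 0)
    (hf0 : f 0 = 0) (hg0 : g 0 = 0)
    (hplow : ∀ j < mf, ∀ v : Fin n → ℂ, p j (fun _ => v) = 0)
    (hpm : (fun v : Fin n → ℂ => p mf (fun _ => v)) ≠ 0)
    (hqlow : ∀ j < mg, ∀ v : Fin n → ℂ, q j (fun _ => v) = 0)
    (hqm : (fun v : Fin n → ℂ => q mg (fun _ => v)) ≠ 0)
    (dφ : (Fin n → ℂ) → Fin n → ℂ) (dφh : ℂ → ℂ)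
    (hdφ : IsHomeomorph dφ) (hdφh : IsHomeomorph dφh)
    (hdφ0 : dφ 0 = 0) (hdφh0 : dφh 0 = 0)
    (heq : ∀ v : Fin n → ℂ, p mf (fun _ => v) = dφh (q mg (fun _ => dφ v))) :
    (∀ c : ℂ, dφh c = 1 →
      Nonempty ({v : Fin n → ℂ // p mf (fun _ => v) = 1} ≃ₜ
        {v : Fin n → ℂ // q mg (fun _ => v) = c})) ∧
    Nonempty (ContinuousMap.HomotopyEquiv {v : Fin n → ℂ // p mf (fun _ => v) = 1}
      {v : Fin n → ℂ // q mg (fun _ => v) = 1}) := by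
  -- mg is positive
  have hmg : 0 < mg := by
    rcases Nat.eq_zero_or_pos mg with h | h
    · exfalso
      apply hqm
      subst h
      funext v
      simpa [hg0] using hq.coeff_zero (fun _ => v)
    · exact h
  -- Part 1: the fibre homeomorphism
  have key : ∀ c : ℂ, dφh c = 1 →
      Nonempty ({v : Fin n → ℂ // p mf (fun _ => v) = 1} ≃ₜ
        {v : Fin n → ℂ // q mg (fun _ => v) = c}) := by
    intro c hc
    refine ⟨(hdφ.homeomorph dφ).subtype ?_⟩
    intro v
    simp only [IsHomeomorph.homeomorph_apply]
    rw [heq v]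
    exact ⟨fun h1 => hdφh.injective (h1.trans hc.symm), fun h1 => by rw [h1, hc]⟩
  refine ⟨key, ?_⟩
  -- find c with dφh c = 1
  obtain ⟨c, hc⟩ := hdφh.surjective 1
  have hcne : c ≠ 0 := by
    rintro rfl
    rw [hdφh0] at hc
    exact one_ne_zero hc.symm
  obtain ⟨E⟩ := key c hc
  -- scaling homeomorphism from {q = 1} to {q = c}
  obtain ⟨a, ha⟩ := IsAlgClosed.exists_pow_nat_eq c hmg
  have hane : a ≠ 0 := by
    rintro rfl
    exact hcne (by simpa [hmg.ne'] using ha.symm)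
  have hscale : ∀ v : Fin n → ℂ, q mg (fun _ => a • v) = c * q mg (fun _ => v) := by
    intro v
    have := (q mg).map_smul_univ (fun _ : Fin mg => a) (fun _ => v)
    simpa [Finset.prod_const, ha, smul_eq_mul] using this
  let S : (Fin n → ℂ) ≃ₜ (Fin n → ℂ) := Homeomorph.smulOfNeZero a hane
  have E2 : {v : Fin n → ℂ // q mg (fun _ => v) = 1} ≃ₜ
      {v : Fin n → ℂ // q mg (fun _ => v) = c} := by
    refine S.subtype ?_
    intro v
    constructor
    · intro h1
      show q mg (fun _ => a • v) = c
      rw [hscale, h1, mul_one]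
    · intro h1
      have : c * q mg (fun _ => v) = c := by rw [← hscale]; exact h1
      exact mul_left_cancel₀ hcne (by rw [this, mul_one])
  exact ⟨(E.trans E2.symm).toHomotopyEquiv⟩
end
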